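/- arXiv:1910.01181 — 4 statements merged into one kernel-verified Lean document; each statement's English description precedes it below -/
import Mathlib

section
/- The composition of two autarkies φ and ψ for a CNF formula F, defined as the partial assignment acting like ψ on the variables in the domain of ψ and like φ on the remaining variables in the domain of φ, is again an autarky for F. -/
/-- Variables are natural numbers. -/
abbrev Var := Nat
/-- A literal is a variable with a polarity. -/
abbrev Lit := Var × Bool
/-- A clause is a set of literals. -/
abbrev Clause := Set Lit
/-- A CNF formula is a set of clauses. -/
abbrev CNF := Set Clause
/-- A partial assignment maps variables to optional Boolean values. -/
abbrev PAssign := Var → Option Bool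

/-- φ touches C if some variable of C is in the domain of φ. -/
def touches (phi : PAssign) (C : Clause) : Prop := ∃ l ∈ C, phi l.1 ≠ none
/-- φ satisfies C if some literal of C is made true by φ. -/
def psat (phi : PAssign) (C : Clause) : Prop := ∃ l ∈ C, phi l.1 = some l.2
/-- φ is an autarky for F: every clause of F touched by φ is satisfied by φ. -/
def Autarky (phi : PAssign) (F : CNF) : Prop := ∀ C ∈ F, touches phi C → psat phi C
/-- F[φ]: the clauses of F not satisfied by φ. -/
def reduce (F : CNF) (phi : PAssign) : CNF := {C ∈ F | ¬ psat phi C}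
/-- A total assignment θ satisfies a clause. -/
def csat (theta : Var → Bool) (C : Clause) : Prop := ∃ l ∈ C, theta l.1 = l.2
/-- Satisfiability of a CNF. -/
def Sat (F : CNF) : Prop := ∃ theta : Var → Bool, ∀ C ∈ F, csat theta C
/-- Composition ψ∘φ: agrees with ψ on dom ψ, with φ on dom φ \ dom ψ. -/
def comp (psi phi : PAssign) : PAssign := fun v => (psi v).elim (phi v) some
/-- The empty (trivial) partial assignment. -/
def emptyPA : PAssign := fun _ => none
/-- The variables occurring in F. -/
def varsOf (F : CNF) : Set Var := {v | ∃ C ∈ F, ∃ l ∈ C, l.1 = v}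
/-- F is lean: every autarky for F is trivial on the variables of F. -/
def IsLean (F : CNF) : Prop := ∀ phi : PAssign, Autarky phi F → ∀ v ∈ varsOf F, phi v = none
/-- The lean kernel: union of all lean subformulas. -/
def leanKernel (F : CNF) : CNF := ⋃₀ {G | G ⊆ F ∧ IsLean G}

theorem comp_apply_of_eq_none {psi : PAssign} (phi : PAssign) {v : Var} (h : psi v = none) :
    comp psi phi v = phi v := by
  simp [comp, h]

theorem comp_apply_of_eq_some {psi : PAssign} (phi : PAssign) {v : Var} {b : Bool}
    (h : psi v = some b) : comp psi phi v = some b := by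
  simp [comp, h]

theorem psat_comp_of_psat_left {psi : PAssign} (phi : PAssign) {C : Clause} (h : psat psi C) :
    psat (comp psi phi) C :=
  let ⟨l, hl, hsat⟩ := h
  ⟨l, hl, comp_apply_of_eq_some phi hsat⟩

theorem comp_apply_of_not_touches {psi : PAssign} (phi : PAssign) {C : Clause}
    (h : ¬ touches psi C) {l : Lit} (hl : l ∈ C) : comp psi phi l.1 = phi l.1 :=
  comp_apply_of_eq_none phi (not_not.mp fun hne => h ⟨l, hl, hne⟩)

section congr

variable {phi phi' : PAssign} {C : Clause}

theorem touches_congr (h : ∀ l ∈ C, phi l.1 = phi' l.1) : touches phi C ↔ touches phi' C := by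
  simp only [touches]
  exact exists_congr fun l => and_congr_right fun hl => by rw [h l hl]

theorem psat_congr (h : ∀ l ∈ C, phi l.1 = phi' l.1) : psat phi C ↔ psat phi' C := by
  simp only [psat]
  exact exists_congr fun l => and_congr_right fun hl => by rw [h l hl]

end congr

theorem autarky_comp (F : CNF) (phi psi : PAssign)
    (h1 : Autarky phi F) (h2 : Autarky psi F) : Autarky (comp psi phi) F := by
  intro C hC htouch
  by_cases hpsi : touches psi C
  · exact psat_comp_of_psat_left phi (h2 C hC hpsi)
  · -- off dom ψ the composition is φ, so C is a clause touched by φ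
    have hagree : ∀ l ∈ C, comp psi phi l.1 = phi l.1 :=
      fun _ hl => comp_apply_of_not_touches phi hpsi hl
    exact (psat_congr hagree).mpr (h1 C hC ((touches_congr hagree).mp htouch))
end

section
/- Autarky reduction on CNF formulas is confluent: repeatedly removing the clauses satisfied by some nontrivial autarky, in any order, terminates with the same final formula, namely the largest lean subformula (lean kernel) of F. -/
/-- One autarky-reduction step by a nontrivial autarky, changing the formula. -/
def Red (F F' : CNF) : Prop :=
  ∃ phi : PAssign, (∃ v, phi v ≠ none) ∧ Autarky phi F ∧ F' = reduce F phi ∧ F' ≠ F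

/-!
An autarky of `F` restricts to an autarky of any subformula `G`, which is trivial on the
variables of `G` when `G` is lean; so autarky reduction never removes a clause of a lean
subformula, and every step preserves the lean kernel. A formula admitting no step is lean,
hence equal to its own kernel, and on a finite formula some such formula is reached because
every step strictly shrinks the formula.
-/

theorem Autarky.exists_restrict {phi : PAssign} {F G : CNF} (hphi : Autarky phi F) (hGF : G ⊆ F) :
    ∃ psi : PAssign, Autarky psi G ∧ ∀ v ∈ varsOf G, psi v = phi v := by
  classical
  refine ⟨(varsOf G).piecewise phi emptyPA, ?_, fun v hv => Set.piecewise_eq_of_mem _ _ _ hv⟩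
  have hvars : ∀ C ∈ G, ∀ l ∈ C, (varsOf G).piecewise phi emptyPA l.1 = phi l.1 :=
    fun C hC l hl => Set.piecewise_eq_of_mem _ _ _ ⟨C, hC, l, hl, rfl⟩
  rintro C hC ⟨l, hl, htouch⟩
  rw [hvars C hC l hl] at htouch
  obtain ⟨l', hl', hsat⟩ := hphi C (hGF hC) ⟨l, hl, htouch⟩
  exact ⟨l', hl', (hvars C hC l' hl').trans hsat⟩

theorem IsLean.eq_none_of_autarky {phi : PAssign} {F G : CNF} (hG : IsLean G) (hGF : G ⊆ F)
    (hphi : Autarky phi F) {v : Var} (hv : v ∈ varsOf G) : phi v = none := by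
  obtain ⟨psi, hpsi, hagree⟩ := hphi.exists_restrict hGF
  rw [← hagree v hv]
  exact hG psi hpsi v hv

theorem IsLean.subset_reduce {phi : PAssign} {F G : CNF} (hG : IsLean G) (hGF : G ⊆ F)
    (hphi : Autarky phi F) : G ⊆ reduce F phi := by
  rintro C hC
  refine ⟨hGF hC, fun ⟨l, hl, hsat⟩ => ?_⟩
  rw [hG.eq_none_of_autarky hGF hphi ⟨C, hC, l, hl, rfl⟩] at hsat
  exact Option.some_ne_none _ hsat.symm

theorem leanKernel_reduce {phi : PAssign} {F : CNF} (hphi : Autarky phi F) :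
    leanKernel (reduce F phi) = leanKernel F := by
  ext C
  simp only [leanKernel, Set.mem_sUnion, Set.mem_ofPred_eq]
  constructor
  · rintro ⟨G, ⟨hGF, hG⟩, hCG⟩
    exact ⟨G, ⟨hGF.trans (Set.sep_subset _ _), hG⟩, hCG⟩
  · rintro ⟨G, ⟨hGF, hG⟩, hCG⟩
    exact ⟨G, ⟨hG.subset_reduce hGF hphi, hG⟩, hCG⟩

theorem IsLean.leanKernel_eq {F : CNF} (hF : IsLean F) : leanKernel F = F :=
  Set.Subset.antisymm (Set.sUnion_subset fun _ hG => hG.1) (Set.subset_sUnion_of_mem ⟨le_rfl, hF⟩)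

theorem Red.ssubset {F F' : CNF} (h : Red F F') : F' ⊂ F := by
  obtain ⟨phi, -, -, rfl, hne⟩ := h
  exact (Set.sep_subset _ _).ssubset_of_ne hne

theorem Red.leanKernel_eq {F F' : CNF} (h : Red F F') : leanKernel F' = leanKernel F := by
  obtain ⟨phi, -, hphi, rfl, -⟩ := h
  exact leanKernel_reduce hphi

theorem isLean_of_forall_not_red {F : CNF} (h : ∀ G, ¬ Red F G) : IsLean F := by
  rintro phi hphi v ⟨C, hC, l, hl, rfl⟩
  by_contra hv
  have hsat : psat phi C := hphi C hC ⟨l, hl, hv⟩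
  refine h (reduce F phi) ⟨phi, ⟨l.1, hv⟩, hphi, rfl, fun heq => ?_⟩
  exact (heq.symm ▸ hC : C ∈ reduce F phi).2 hsat

theorem leanKernel_eq_of_reflTransGen {F F' : CNF} (h : Relation.ReflTransGen Red F F') :
    leanKernel F' = leanKernel F := by
  induction h with
  | refl => rfl
  | tail _ hstep ih => exact hstep.leanKernel_eq.trans ih

theorem subset_of_reflTransGen {F F' : CNF} (h : Relation.ReflTransGen Red F F') : F' ⊆ F := by
  induction h with
  | refl => exact le_rfl
  | tail _ hstep ih => exact hstep.ssubset.subset.trans ih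

theorem exists_irreducible_of_finite {F : CNF} (hF : F.Finite) :
    ∃ F', Relation.ReflTransGen Red F F' ∧ ∀ G, ¬ Red F' G := by
  have hfin : {F' | Relation.ReflTransGen Red F F'}.Finite :=
    hF.finite_subsets.subset fun _ => subset_of_reflTransGen
  obtain ⟨F', hreach, hmin⟩ := hfin.exists_minimal ⟨F, Relation.ReflTransGen.refl⟩
  exact ⟨F', hreach, fun G hG => hG.ssubset.not_subset (hmin (hreach.tail hG) hG.ssubset.subset)⟩

theorem autarky_reduction_confluent (F : CNF) (hF : F.Finite) :
    (∃ F', Relation.ReflTransGen Red F F' ∧ ∀ G, ¬ Red F' G) ∧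
    (∀ F₁ F₂, Relation.ReflTransGen Red F F₁ → (∀ G, ¬ Red F₁ G) →
        Relation.ReflTransGen Red F F₂ → (∀ G, ¬ Red F₂ G) →
      F₁ = F₂ ∧ F₁ = leanKernel F) := by
  have eq_leanKernel : ∀ F', Relation.ReflTransGen Red F F' → (∀ G, ¬ Red F' G) →
      F' = leanKernel F := fun F' hreach hirred =>
    (isLean_of_forall_not_red hirred).leanKernel_eq.symm.trans
      (leanKernel_eq_of_reflTransGen hreach)
  refine ⟨exists_irreducible_of_finite hF, fun F₁ F₂ h₁ hirr₁ h₂ hirr₂ => ?_⟩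
  have e₁ := eq_leanKernel F₁ h₁ hirr₁
  exact ⟨e₁.trans (eq_leanKernel F₂ h₂ hirr₂).symm, e₁⟩
end

section
/- Every CNF formula F has a largest lean subformula (the lean kernel): the union of all lean subformulas of F is itself lean, and hence is the unique maximal lean subformula of F. -/
theorem Autarky.mono {phi : PAssign} {F G : CNF} (h : Autarky phi F) (hGF : G ⊆ F) :
    Autarky phi G :=
  fun C hC => h C (hGF hC)

theorem mem_varsOf_sUnion {S : Set CNF} {v : Var} :
    v ∈ varsOf (⋃₀ S) ↔ ∃ G ∈ S, v ∈ varsOf G := by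
  constructor
  · rintro ⟨C, ⟨G, hGS, hCG⟩, hv⟩
    exact ⟨G, hGS, C, hCG, hv⟩
  · rintro ⟨G, hGS, C, hCG, hv⟩
    exact ⟨C, ⟨G, hGS, hCG⟩, hv⟩

theorem isLean_sUnion {S : Set CNF} (hS : ∀ G ∈ S, IsLean G) : IsLean (⋃₀ S) := by
  intro phi hphi v hv
  obtain ⟨G, hGS, hvG⟩ := mem_varsOf_sUnion.mp hv
  exact hS G hGS phi (hphi.mono (Set.subset_sUnion_of_mem hGS)) v hvG

theorem lean_kernel_largest (F : CNF) :
    leanKernel F ⊆ F ∧ IsLean (leanKernel F) ∧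
    ∀ G, G ⊆ F → IsLean G → G ⊆ leanKernel F :=
  ⟨Set.sUnion_subset fun _ hG => hG.1,
    isLean_sUnion fun _ hG => hG.2,
    fun _ hGF hG => Set.subset_sUnion_of_mem ⟨hGF, hG⟩⟩
end

section
/- If σ is a symmetry of a CNF formula F (a permutation of literals commuting with negation that maps F to itself), and F is satisfiable, then F ∧ Φ is satisfiable, where Φ is any symmetry-breaking formula with the property that for every total assignment θ there exists an element g of the symmetry group with g(θ) satisfying Φ. Hence F and F ∧ Φ are satisfiability-equivalent. -/
/-- Negation of a literal. -/
def negL (l : Lit) : Lit := (l.1, !l.2)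
/-- σ is a symmetry of F: a permutation of literals commuting with negation mapping F to itself. -/
def IsSym (sigma : Lit ≃ Lit) (F : CNF) : Prop :=
  (∀ l : Lit, sigma (negL l) = negL (sigma l)) ∧ (fun C : Clause => (sigma : Lit → Lit) '' C) '' F = F
/-- Action of a literal permutation on total assignments: (σθ)(σℓ) = θ(ℓ). -/
def actA (sigma : Lit ≃ Lit) (theta : Var → Bool) : Var → Bool :=
  fun v => decide (theta (sigma.symm (v, true)).1 = (sigma.symm (v, true)).2)

theorem actA_apply_eq_iff {sigma : Lit ≃ Lit} (hneg : ∀ l : Lit, sigma (negL l) = negL (sigma l))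
    (theta : Var → Bool) (l : Lit) :
    actA sigma theta (sigma l).1 = (sigma l).2 ↔ theta l.1 = l.2 := by
  obtain ⟨v, b⟩ := l
  rcases hb : (sigma (v, b)).2 with _ | _
  · -- `(v', true)` is the negation of `σ (v, b) = (v', false)`, so it is `σ (v, !b)`.
    have hpre : sigma.symm ((sigma (v, b)).1, true) = (v, !b) := by
      rw [Equiv.symm_apply_eq, show ((v, !b) : Lit) = negL (v, b) from rfl, hneg]
      simp [negL, hb]
    cases b <;> cases h : theta v <;> simp [actA, hpre, h]
  · have hpre : sigma.symm ((sigma (v, b)).1, true) = (v, b) := by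
      rw [Equiv.symm_apply_eq, ← hb]
    simp [actA, hpre]

theorem csat_actA_image {sigma : Lit ≃ Lit} (hneg : ∀ l : Lit, sigma (negL l) = negL (sigma l))
    (theta : Var → Bool) (C : Clause) :
    csat (actA sigma theta) (sigma '' C) ↔ csat theta C := by
  simp only [csat, Set.exists_mem_image, actA_apply_eq_iff hneg]

theorem IsSym.csat_actA {sigma : Lit ≃ Lit} {F : CNF} (hs : IsSym sigma F) {theta : Var → Bool}
    (hθ : ∀ C ∈ F, csat theta C) : ∀ C ∈ F, csat (actA sigma theta) C := by
  obtain ⟨hneg, himg⟩ := hs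
  rw [← himg]
  rintro _ ⟨C, hC, rfl⟩
  exact (csat_actA_image hneg theta C).2 (hθ C hC)

theorem Sat.union_of_breaker {F Phi : CNF} {G : Set (Lit ≃ Lit)}
    (hG : ∀ sigma ∈ G, IsSym sigma F)
    (hbrk : ∀ theta : Var → Bool, ∃ g ∈ G, ∀ C ∈ Phi, csat (actA g theta) C) :
    Sat F → Sat (F ∪ Phi) := by
  rintro ⟨theta, hθ⟩
  obtain ⟨g, hgG, hgPhi⟩ := hbrk theta
  refine ⟨actA g theta, fun C hC => ?_⟩
  rcases hC with hCF | hCPhi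
  · exact (hG g hgG).csat_actA hθ C hCF
  · exact hgPhi C hCPhi

theorem Sat.of_union_left {F Phi : CNF} : Sat (F ∪ Phi) → Sat F :=
  fun ⟨theta, hθ⟩ => ⟨theta, fun C hC => hθ C (Or.inl hC)⟩

theorem symmetry_breaker_satEquiv (F Phi : CNF) (G : Set (Lit ≃ Lit))
    (hG : ∀ sigma ∈ G, IsSym sigma F)
    (hbrk : ∀ theta : Var → Bool, ∃ g ∈ G, ∀ C ∈ Phi, csat (actA g theta) C) :
    (Sat F → Sat (F ∪ Phi)) ∧ (Sat F ↔ Sat (F ∪ Phi)) := by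
  have hsat := Sat.union_of_breaker hG hbrk
  exact ⟨hsat, hsat, Sat.of_union_left⟩
end
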